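/- arXiv:1503.06512 — 2 statements merged into one kernel-verified Lean document; each statement's English description precedes it below -/
import Mathlib

section
/- Let p be an odd prime, q = p^m, Tr the trace map from GF(q) to GF(p), and ε_p = e^{2πi/p}. Then the double character sum S = ∑_{y ∈ GF(p)*} ∑_{x ∈ GF(q)} ε_p^{Tr(y x²)} equals 0 if m is odd, and equals (-1)^{m-1} (-1)^{((p-1)/2)² · m/2} (p-1)√q if m is even. -/
open Finset

/-- The additive character `a ↦ e^{2πi a / p}` of `ZMod p`. -/
noncomputable def epsChar (p : ℕ) (a : ZMod p) : ℂ :=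
  Complex.exp (2 * Real.pi * Complex.I * (a.val : ℂ) / (p : ℂ))

lemma epsChar_eq_std (p : ℕ) [NeZero p] (a : ZMod p) :
    epsChar p a = ZMod.stdAddChar a := by
  have h : ((a.val : ℤ) : ZMod p) = a := by
    push_cast
    exact ZMod.natCast_rightInverse a
  unfold epsChar
  conv_rhs => rw [← h]
  rw [ZMod.stdAddChar_coe]
  push_cast
  ring_nf

lemma stdAddChar_ne_one' (p : ℕ) [Fact p.Prime] {a : ZMod p} (ha : a ≠ 0) :
    ZMod.stdAddChar a ≠ (1 : ℂ) := by
  rw [← epsChar_eq_std]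
  unfold epsChar
  intro h
  rw [Complex.exp_eq_one_iff] at h
  obtain ⟨n, hn⟩ := h
  have hπ : (2 * (Real.pi : ℂ) * Complex.I) ≠ 0 := by
    simp [Real.pi_ne_zero, Complex.I_ne_zero]
  have hp0 : (p : ℂ) ≠ 0 := by
    exact_mod_cast (Fact.out : p.Prime).pos.ne'
  rw [div_eq_iff hp0] at hn
  have hval : (a.val : ℂ) = (n : ℂ) * p := by
    apply mul_left_cancel₀ hπ
    linear_combination hn
  have hvz : (a.val : ℤ) = n * p := by exact_mod_cast hval
  have h1 : a.val < p := ZMod.val_lt a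
  have h2 : a.val ≠ 0 := fun h0 => ha ((ZMod.val_eq_zero a).mp h0)
  have hdvd : (p : ℤ) ∣ (a.val : ℤ) := ⟨n, by rw [hvz]; ring⟩
  have hdvd' : p ∣ a.val := by exact_mod_cast hdvd
  have := Nat.le_of_dvd (by omega) hdvd'
  omega

/-- Key generic lemma: sum of ψ(c x²) over a finite field. -/
lemma sum_quad_eq' {E : Type*} [Field E] [Fintype E] [DecidableEq E] (hE : ringChar E ≠ 2)
    (ψ : AddChar E ℂ) (hψ : ψ ≠ 1) (c : E) (hc : c ≠ 0) :
    ∑ x : E, ψ (c * x ^ 2) =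
      ((quadraticChar E c : ℤ) : ℂ) *
        gaussSum ((quadraticChar E).ringHomComp (Int.castRingHom ℂ)) ψ := by
  set χ := (quadraticChar E).ringHomComp (Int.castRingHom ℂ) with hχ
  have key : ∀ u : E, (#{x : E | x ^ 2 = u}.toFinset : ℂ) = χ u + 1 := by
    intro u
    have := quadraticChar_card_sqrts hE u
    have : ((#{x : E | x ^ 2 = u}.toFinset : ℤ) : ℂ) = ((quadraticChar E u + 1 : ℤ) : ℂ) := by
      exact_mod_cast congrArg (Int.cast : ℤ → ℂ) this
    simpa [χ, MulChar.ringHomComp] using this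
  have fib : ∑ x : E, ψ (c * x ^ 2) = ∑ u : E, (#{x : E | x ^ 2 = u}.toFinset : ℂ) * ψ (c * u) := by
    rw [← Finset.sum_fiberwise Finset.univ (fun x : E => x ^ 2) (fun x => ψ (c * x ^ 2))]
    refine Finset.sum_congr rfl fun u _ => ?_
    rw [Finset.sum_congr rfl (fun x hx => ?_), Finset.sum_const, nsmul_eq_mul]
    · congr 2
      · simp [Set.toFinset_setOf]
    · simp only [Finset.mem_filter] at hx
      rw [hx.2]
  have hmul : (AddChar.mulShift ψ c) ≠ 1 := (AddChar.IsPrimitive.of_ne_one hψ) hc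
  have sum0 : ∑ u : E, ψ (c * u) = 0 := by
    simpa [AddChar.mulShift_apply] using AddChar.sum_eq_zero_of_ne_one hmul
  have sumg : ∑ u : E, χ u * ψ (c * u) = gaussSum χ (AddChar.mulShift ψ c) := by
    simp [gaussSum, AddChar.mulShift_apply]
  have hcu : IsUnit c := hc.isUnit
  have hshift := gaussSum_mulShift χ ψ hcu.unit
  have hsq : χ c * χ c = 1 := by
    have := quadraticChar_sq_one hc
    have : ((quadraticChar E c ^ 2 : ℤ) : ℂ) = 1 := by
      exact_mod_cast congrArg (Int.cast : ℤ → ℂ) this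
    simpa [χ, MulChar.ringHomComp, sq, Int.cast_mul] using this
  have hgs : gaussSum χ (AddChar.mulShift ψ c) = χ c * gaussSum χ ψ := by
    have h1 : χ (hcu.unit : E) = χ c := rfl
    calc gaussSum χ (AddChar.mulShift ψ c) = 1 * gaussSum χ (AddChar.mulShift ψ hcu.unit) := by
          rw [one_mul]; rfl
      _ = (χ c * χ c) * gaussSum χ (AddChar.mulShift ψ hcu.unit) := by rw [hsq]
      _ = χ c * (χ (hcu.unit : E) * gaussSum χ (AddChar.mulShift ψ hcu.unit)) := by rw [h1]; ring
      _ = χ c * gaussSum χ ψ := by rw [hshift]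
  calc ∑ x : E, ψ (c * x ^ 2) = ∑ u : E, (χ u + 1) * ψ (c * u) := by
        rw [fib]; exact Finset.sum_congr rfl fun u _ => by rw [key u]
    _ = (∑ u : E, χ u * ψ (c * u)) + ∑ u : E, ψ (c * u) := by
        rw [← Finset.sum_add_distrib]; exact Finset.sum_congr rfl fun u _ => by ring
    _ = gaussSum χ (AddChar.mulShift ψ c) := by rw [sum0, sumg, add_zero]
    _ = ((quadraticChar E c : ℤ) : ℂ) * gaussSum χ ψ := by
        rw [hgs]; rfl

/-- geometric sum identity in ℕ -/
lemma geom_nat (p : ℕ) (hp : 1 ≤ p) : ∀ m : ℕ, (p - 1) * (∑ i ∈ range m, p ^ i) = p ^ m - 1 := by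
  intro m
  induction m with
  | zero => simp
  | succ n ih =>
    rw [geom_sum_succ', Nat.mul_add, ih]
    have h1 : 1 ≤ p ^ n := Nat.one_le_pow _ _ hp
    have h2 : p ^ n ≤ p ^ (n+1) := Nat.pow_le_pow_right hp (by omega)
    have h3 : (p - 1) * p ^ n + p ^ n = p ^ (n+1) := by
      cases' Nat.exists_eq_add_of_le hp with c hc
      subst hc
      have : (1 + c - 1) = c := by omega
      rw [this, pow_succ]
      ring
    omega

lemma geom_parity (p : ℕ) (hp : Odd p) (m : ℕ) : (∑ i ∈ range m, p ^ i) % 2 = m % 2 := by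
  induction m with
  | zero => simp
  | succ n ih =>
    rw [geom_sum_succ']
    have : p ^ n % 2 = 1 := Nat.odd_iff.mp (hp.pow)
    omega

lemma pow_mod_four (p k : ℕ) (hp : Odd p) :
    p ^ k % 4 = 3 ↔ (p % 4 = 3 ∧ k % 2 = 1) := by
  have hp4 : p % 4 = 1 ∨ p % 4 = 3 := by
    have := Nat.odd_iff.mp hp; omega
  rw [Nat.pow_mod]
  rcases hp4 with h | h
  · have h1 : (1:ℕ) ^ k % 4 = 1 := by simp
    rw [h]
    omega
  · rw [h]
    rcases Nat.even_or_odd k with hk | hk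
    · obtain ⟨j, hj⟩ := hk
      subst hj
      have : (3:ℕ) ^ (j + j) % 4 = 1 := by
        rw [show j + j = 2 * j by ring, pow_mul, Nat.pow_mod]
        norm_num
      omega
    · obtain ⟨j, hj⟩ := hk
      subst hj
      have h9 : (3:ℕ) ^ (2*j+1) % 4 = 3 := by
        rw [pow_succ, Nat.mul_mod, pow_mul, Nat.pow_mod]
        norm_num
      rw [h9]
      omega

lemma neg_one_pow_par (a b : ℕ) (h : a % 2 = b % 2) : ((-1 : ℂ)) ^ a = (-1) ^ b := by
  conv_lhs => rw [← Nat.div_add_mod a 2]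
  conv_rhs => rw [← Nat.div_add_mod b 2]
  rw [pow_add, pow_add, pow_mul, pow_mul, h]
  norm_num

theorem stmt_1 (p m : ℕ) [Fact p.Prime] (hp : Odd p) (hm : 0 < m)
    (F : Type*) [Field F] [Fintype F] [Algebra (ZMod p) F]
    (hcard : Fintype.card F = p ^ m)
    (Tr : F → ZMod p) (hTr : Tr = Algebra.trace (ZMod p) F) :
    (Odd m →
      ∑ y ∈ Finset.univ.filter (fun y : ZMod p => y ≠ 0), ∑ x : F,
        epsChar p (Tr (algebraMap (ZMod p) F y * x ^ 2)) = 0) ∧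
    (Even m →
      ∑ y ∈ Finset.univ.filter (fun y : ZMod p => y ≠ 0), ∑ x : F,
        epsChar p (Tr (algebraMap (ZMod p) F y * x ^ 2)) =
      (-1 : ℂ) ^ (m - 1) * (-1 : ℂ) ^ (((p - 1) / 2) ^ 2 * (m / 2)) *
        ((p : ℂ) - 1) * (p : ℂ) ^ (m / 2)) := by
  classical
  subst hTr
  set Tr := Algebra.trace (ZMod p) F with hTr
  have hp2 : p ≠ 2 := by rintro rfl; exact (Nat.not_odd_iff_even.mpr (by norm_num)) hp
  have hpp : p.Prime := Fact.out
  have hp3 : 3 ≤ p := by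
    have := hpp.two_le
    rcases Nat.lt_or_ge p 3 with h | h
    · interval_cases p <;> simp_all
    · exact h
  haveI : CharP F p := charP_of_injective_ringHom (algebraMap (ZMod p) F).injective p
  have hrc : ringChar F = p := ringChar.eq F p
  have hF2 : ringChar F ≠ 2 := by rw [hrc]; exact hp2
  have h2F : (2 : F) ≠ 0 := Ring.two_ne_zero hF2
  -- the additive character of F
  set ψF : AddChar F ℂ :=
    (ZMod.stdAddChar (N := p)).compAddMonoidHom (Algebra.trace (ZMod p) F).toAddMonoidHom
    with hψF
  have hψFapp : ∀ z : F, ψF z = ZMod.stdAddChar (Tr z) := fun z => rfl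
  have heps : ∀ z : F, epsChar p (Tr z) = ψF z := by
    intro z
    rw [epsChar_eq_std, hψFapp]
  have hTrSurj : Function.Surjective Tr := Algebra.trace_surjective (ZMod p) F
  have hψFne : ψF ≠ 1 := by
    intro h
    obtain ⟨z, hz⟩ := hTrSurj 1
    have h1 : ψF z = 1 := by rw [h]; rfl
    rw [hψFapp, hz] at h1
    exact stdAddChar_ne_one' p one_ne_zero h1
  -- trace invariance under Frobenius
  have hfrob : ∀ x : F, Tr (x ^ p) = Tr x := by
    have hcomm : ∀ a : ZMod p,
        (frobenius F p) (algebraMap (ZMod p) F a) = algebraMap (ZMod p) F a := by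
      intro a
      rw [frobenius_def, ← map_pow, ZMod.pow_card]
    let e : F ≃ₐ[ZMod p] F :=
      AlgEquiv.ofBijective ⟨frobenius F p, hcomm⟩
        ((Finite.injective_iff_bijective).mp (frobenius F p).injective)
    intro x
    have := Algebra.trace_eq_of_algEquiv e x
    simpa [e, frobenius_def] using this
  have hfrobk : ∀ (j : ℕ) (x : F), Tr (x ^ p ^ j) = Tr x := by
    intro j
    induction j with
    | zero => simp
    | succ n ih =>
      intro x
      rw [pow_succ, pow_mul, hfrob (x ^ p ^ n), ih]
  -- arithmetic of exponents
  set u : ℕ := ∑ i ∈ range m, p ^ i with hu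
  have hgeom : (p - 1) * u = p ^ m - 1 := geom_nat p hpp.one_lt.le m
  have hupar : u % 2 = m % 2 := geom_parity p hp m
  set d : ℕ := p ^ m / 2 with hd
  have hpmodd : Odd (p ^ m) := hp.pow
  have h2d : 2 * d = p ^ m - 1 := by
    have := Nat.odd_iff.mp hpmodd
    omega
  have hpm1 : 1 ≤ p ^ m := Nat.one_le_pow _ _ hpp.pos
  constructor
  · -- odd case
    intro hmodd
    have huodd : u % 2 = 1 := by rw [hupar]; exact Nat.odd_iff.mp hmodd
    have hd_eq : d = (p - 1) / 2 * u := by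
      have ha : 2 * ((p - 1) / 2) = p - 1 := by
        have := Nat.odd_iff.mp hp; omega
      have h6 : 2 * ((p - 1) / 2 * u) = 2 * d := by
        rw [← mul_assoc, ha, hgeom, h2d]
      exact (Nat.eq_of_mul_eq_mul_left (by norm_num) h6).symm
    set χF := (quadraticChar F).ringHomComp (Int.castRingHom ℂ) with hχF
    set gF := gaussSum χF ψF with hgF
    have hinner : ∀ y : ZMod p, y ≠ 0 →
        ∑ x : F, ψF (algebraMap (ZMod p) F y * x ^ 2) =
          ((quadraticChar (ZMod p) y : ℤ) : ℂ) * gF := by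
      intro y hy
      have hay : algebraMap (ZMod p) F y ≠ 0 := by
        simp only [ne_eq, map_eq_zero]
        exact hy
      rw [sum_quad_eq' hF2 ψF hψFne _ hay]
      congr 2
      -- quadraticChar F (alg y) = quadraticChar (ZMod p) y
      have hiff : IsSquare (algebraMap (ZMod p) F y) ↔ IsSquare y := by
        constructor
        · intro hs
          by_contra hns
          have h1 : y ^ (p / 2) = -1 := by
            have hdich := FiniteField.pow_dichotomy (by
              rw [ZMod.ringChar_zmod_n]; exact hp2) hy
            rw [ZMod.card p] at hdich
            rcases hdich with h | h
            · exact absurd ((ZMod.euler_criterion p hy).mpr h) hns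
            · exact h
          have h2 : (algebraMap (ZMod p) F y) ^ (Fintype.card F / 2) = 1 :=
            (FiniteField.isSquare_iff hF2 hay).mp hs
          rw [hcard] at h2
          have hp2d : p / 2 = (p - 1) / 2 := by
            have := Nat.odd_iff.mp hp; omega
          have h3 : (algebraMap (ZMod p) F y) ^ d = 1 := h2
          rw [hd_eq, pow_mul, ← map_pow, ← hp2d, h1, ← map_pow] at h3
          have h4 : ((-1 : ZMod p) ^ u) = -1 := by
            rw [Odd.neg_one_pow (Nat.odd_iff.mpr huodd)]
          rw [h4] at h3
          have h5 : (algebraMap (ZMod p) F) (-1) = -1 := by rw [map_neg, map_one]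
          rw [h5] at h3
          exact (Ring.neg_one_ne_one_of_char_ne_two hF2) h3
        · rintro ⟨r, hr⟩
          exact ⟨algebraMap (ZMod p) F r, by rw [hr, map_mul]⟩
      by_cases hys : IsSquare y
      · rw [(quadraticChar_one_iff_isSquare hay).mpr (hiff.mpr hys),
          (quadraticChar_one_iff_isSquare hy).mpr hys]
      · rw [quadraticChar_neg_one_iff_not_isSquare.mpr (fun h => hys (hiff.mp h)),
          quadraticChar_neg_one_iff_not_isSquare.mpr hys]
    calc ∑ y ∈ Finset.univ.filter (fun y : ZMod p => y ≠ 0), ∑ x : F,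
          epsChar p (Tr (algebraMap (ZMod p) F y * x ^ 2))
        = ∑ y ∈ Finset.univ.filter (fun y : ZMod p => y ≠ 0),
            ((quadraticChar (ZMod p) y : ℤ) : ℂ) * gF := by
          refine Finset.sum_congr rfl fun y hy => ?_
          simp only [Finset.mem_filter] at hy
          rw [← hinner y hy.2]
          exact Finset.sum_congr rfl fun x _ => heps _
      _ = (∑ y ∈ Finset.univ.filter (fun y : ZMod p => y ≠ 0),
            ((quadraticChar (ZMod p) y : ℤ) : ℂ)) * gF := by
          rw [Finset.sum_mul]
      _ = 0 := by
          have hzsum : ∑ y ∈ Finset.univ.filter (fun y : ZMod p => y ≠ 0),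
              ((quadraticChar (ZMod p) y : ℤ) : ℂ) =
              ∑ y : ZMod p, ((quadraticChar (ZMod p) y : ℤ) : ℂ) := by
            rw [Finset.sum_filter]
            refine Finset.sum_congr rfl fun y _ => ?_
            by_cases hy : y = 0
            · simp [hy]
            · simp [hy]
          rw [hzsum]
          have : ∑ y : ZMod p, ((quadraticChar (ZMod p) y : ℤ) : ℂ) =
              ((∑ y : ZMod p, quadraticChar (ZMod p) y : ℤ) : ℂ) := by
            push_cast
            rfl
          rw [this, quadraticChar_sum_zero (by rw [ZMod.ringChar_zmod_n]; exact hp2)]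
          simp
  · -- even case
    intro hmeven
    obtain ⟨k, hmk⟩ : ∃ k, m = 2 * k := by
      obtain ⟨k, hk⟩ := hmeven
      exact ⟨k, by omega⟩
    have hk : 0 < k := by omega
    set Q := p ^ k with hQ
    have hQ1 : 1 < Q := Nat.one_lt_pow hk.ne' hpp.one_lt
    have hQodd : Odd Q := hp.pow
    have hQQ : ∀ x : F, (x ^ Q) ^ Q = x := by
      intro x
      rw [← pow_mul, hQ, ← pow_add, ← two_mul, ← hmk, ← hcard]
      exact FiniteField.pow_card x
    have hnegQ : ∀ x : F, (-x) ^ Q = -(x ^ Q) := fun x => hQodd.neg_pow x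
    have haddQ : ∀ x y : F, (x + y) ^ Q = x ^ Q + y ^ Q := fun x y => add_pow_char_pow x y p k
    set E : Subfield F :=
      { carrier := {x : F | x ^ Q = x}
        mul_mem' := by intro a b ha hb; simp only [Set.mem_setOf_eq] at *; rw [mul_pow, ha, hb]
        one_mem' := by simp
        add_mem' := by
          intro a b ha hb; simp only [Set.mem_setOf_eq] at *; rw [haddQ, ha, hb]
        zero_mem' := by simp [zero_pow (by omega : Q ≠ 0)]
        neg_mem' := by intro a ha; simp only [Set.mem_setOf_eq] at *; rw [hnegQ, ha]
        inv_mem' := by intro a ha; simp only [Set.mem_setOf_eq] at *; rw [inv_pow, ha] } with hE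
    have hmemE : ∀ x : F, x ∈ E ↔ x ^ Q = x := fun x => Iff.rfl
    haveI : Fintype E := Fintype.ofFinite E
    haveI : CharP E p := E.subtype.charP E.subtype.injective p
    have hEch : ringChar (↥E) ≠ 2 := by rw [ringChar.eq (↥E) p]; exact hp2
    obtain ⟨s₀, hs₀Q, hs₀0⟩ : ∃ s₀ : F, s₀ ^ Q = -s₀ ∧ s₀ ≠ 0 := by
      obtain ⟨w, hw⟩ : ∃ w : F, w ^ Q ≠ w := by
        by_contra hcon
        push_neg at hcon
        obtain ⟨ζ, hζ⟩ := IsCyclic.exists_generator (α := Fˣ)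
        have hζcard : orderOf ζ = p ^ m - 1 := by
          rw [orderOf_eq_card_of_forall_mem_zpowers hζ,
            Nat.card_units, Nat.card_eq_fintype_card, hcard]
        have h1 : (ζ : F) ^ Q = ζ := hcon ζ
        have h2 : ζ ^ Q = ζ := Units.ext (by push_cast [h1]; rfl)
        have h3 : ζ ^ (Q - 1) = 1 := by
          have := mul_right_cancel (a := ζ ^ (Q-1)) (b := ζ) (c := 1) ?_
          · exact this
          · rw [one_mul, ← pow_succ, Nat.sub_add_cancel (by omega)]; exact h2
        have h4 : orderOf ζ ∣ Q - 1 := orderOf_dvd_of_pow_eq_one h3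
        have h5 : p ^ m - 1 ≤ Q - 1 := hζcard ▸ Nat.le_of_dvd (by omega) h4
        have h6 : Q < p ^ m := by
          rw [hQ, hmk]
          exact Nat.pow_lt_pow_right hpp.one_lt (by omega)
        omega
      refine ⟨w - w ^ Q, ?_, ?_⟩
      · rw [sub_eq_add_neg, haddQ, hnegQ, hQQ]
        ring
      · intro h
        exact hw (by rwa [sub_eq_zero, eq_comm] at h)
    have hs₀E : s₀ ∉ E := by
      intro h
      rw [hmemE] at h
      rw [h] at hs₀Q
      have h2 : (2 : F) * s₀ = 0 := by linear_combination hs₀Q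
      rcases mul_eq_zero.mp h2 with h | h
      · exact h2F h
      · exact hs₀0 h
    have h2Q : (2 : F) ^ Q = 2 := by
      have hz : (2 : ZMod p) ^ Q = 2 := by
        have h := FiniteField.pow_card_pow (K := ZMod p) (n := k) 2
        rw [ZMod.card] at h
        rw [hQ]
        exact h
      have h2alg : (2 : F) = algebraMap (ZMod p) F 2 := by
        rw [map_ofNat]
      rw [h2alg, ← map_pow, hz]
    set c : F := (2 : F)⁻¹ with hc
    have hcQ : c ^ Q = c := by rw [hc, inv_pow, h2Q]
    have h2c1 : (2 : F) * c = 1 := mul_inv_cancel₀ h2F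
    have hd₀mem : s₀ ^ 2 ∈ E := by
      rw [hmemE, ← pow_mul, mul_comm, pow_mul, hs₀Q, neg_sq]
    set d₀ : ↥E := ⟨s₀ ^ 2, hd₀mem⟩ with hd₀
    set KS : Set F := {s : F | s ^ Q = -s} with hKS
    haveI : Fintype ↥KS := Fintype.ofFinite _
    have hEK0 : ∀ v : F, v ∈ E → v ^ Q = -v → v = 0 := by
      intro v hv hv'
      rw [hmemE] at hv
      rw [hv] at hv'
      have h2 : (2 : F) * v = 0 := by linear_combination hv'
      rcases mul_eq_zero.mp h2 with h | h
      · exact absurd h h2F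
      · exact h
    have hΦbij : Function.Bijective (fun z : ↥E × ↥KS => (z.1 : F) + (z.2 : F)) := by
      constructor
      · rintro ⟨⟨t, ht⟩, ⟨s, hs⟩⟩ ⟨⟨t', ht'⟩, ⟨s', hs'⟩⟩ h
        simp only at h
        have hv : t - t' = s' - s := by linear_combination h
        have hvE : t - t' ∈ E := sub_mem ht ht'
        have hvK : (t - t') ^ Q = -(t - t') := by
          rw [hv]
          rw [hKS] at hs hs'
          rw [sub_eq_add_neg, haddQ, hnegQ, hs, hs']
          ring
        have h0 : t - t' = 0 := hEK0 _ hvE hvK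
        have ht'' : t = t' := by linear_combination h0
        have hs'' : s = s' := by
          have := hv.symm
          rw [h0] at this
          linear_combination -this
        simp [Prod.ext_iff, Subtype.ext_iff, ht'', hs'']
      · intro x
        have htE : (x + x ^ Q) * c ∈ E := by
          rw [hmemE, mul_pow, haddQ, hQQ, hcQ]
          ring
        have hsK : (x - x ^ Q) * c ∈ KS := by
          rw [hKS, Set.mem_setOf_eq, mul_pow, sub_eq_add_neg, haddQ, hnegQ, hQQ, hcQ]
          ring
        refine ⟨⟨⟨(x + x ^ Q) * c, htE⟩, ⟨(x - x ^ Q) * c, hsK⟩⟩, ?_⟩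
        simp only
        have : (x + x ^ Q) * c + (x - x ^ Q) * c = x * (2 * c) := by ring
        rw [this, h2c1, mul_one]
    have hμbij : Function.Bijective (fun e : ↥E =>
        (⟨s₀ * (e : F), by
          rw [hKS, Set.mem_setOf_eq, mul_pow, hs₀Q, e.2]
          ring⟩ : ↥KS)) := by
      constructor
      · intro e e' h
        simp only [Subtype.mk_eq_mk] at h
        have := mul_left_cancel₀ hs₀0 h
        exact Subtype.ext this
      · rintro ⟨s, hs⟩
        have hmem : s * s₀⁻¹ ∈ E := by
          rw [hmemE, mul_pow, inv_pow, hs₀Q]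
          rw [hKS, Set.mem_setOf_eq] at hs
          rw [hs]
          field_simp
        refine ⟨⟨s * s₀⁻¹, hmem⟩, ?_⟩
        ext
        simp only
        field_simp
        try ring
    have hcardE : Fintype.card ↥E = Q := by
      have c1 : Fintype.card ↥E * Fintype.card ↥KS = p ^ m := by
        rw [← Fintype.card_prod, Fintype.card_congr (Equiv.ofBijective _ hΦbij), hcard]
      have c2 : Fintype.card ↥E = Fintype.card ↥KS :=
        Fintype.card_congr (Equiv.ofBijective _ hμbij)
      have c3 : Fintype.card ↥E ^ 2 = Q ^ 2 := by
        have h6 : Fintype.card ↥E * Fintype.card ↥E = Q * Q := by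
          calc Fintype.card ↥E * Fintype.card ↥E
              = Fintype.card ↥E * Fintype.card ↥KS := by rw [← c2]
            _ = p ^ m := c1
            _ = Q * Q := by rw [hQ, ← pow_add, ← two_mul, ← hmk]
        rw [sq, sq]
        exact h6
      exact Nat.pow_left_injective (by norm_num) c3
    -- trace vanishes on KS
    have hTrK : ∀ s : F, s ∈ KS → Tr s = 0 := by
      intro s hs
      rw [hKS, Set.mem_setOf_eq] at hs
      have h1 : Tr (s ^ Q) = Tr s := hfrobk k s
      rw [hs, map_neg] at h1
      have h2p : (2 : ZMod p) ≠ 0 := by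
        have : ringChar (ZMod p) ≠ 2 := by rw [ZMod.ringChar_zmod_n]; exact hp2
        exact Ring.two_ne_zero this
      have : (2 : ZMod p) * Tr s = 0 := by linear_combination -h1
      rcases mul_eq_zero.mp this with h | h
      · exact absurd h h2p
      · exact h
    -- the additive character on E
    set ψE : AddChar ↥E ℂ := ψF.compAddMonoidHom
      (AddMonoidHom.mk' (fun e : ↥E => (e : F)) (by intros; push_cast; ring)) with hψE
    have hψEapp : ∀ e : ↥E, ψE e = ψF (e : F) := fun e => rfl
    have hψEne : ψE ≠ 1 := by
      intro h
      obtain ⟨z, hz⟩ := hTrSurj 1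
      obtain ⟨⟨t, s⟩, hts⟩ := hΦbij.2 z
      simp only at hts
      have hTrz : Tr ((t : F)) = 1 := by
        have : Tr z = Tr (t : F) + Tr (s : F) := by rw [← hts, map_add]
        rw [hz, hTrK _ s.2, add_zero] at this
        exact this.symm
      have h1 : ψE t = 1 := by rw [h]; rfl
      rw [hψEapp, hψFapp, hTrz] at h1
      exact stdAddChar_ne_one' p one_ne_zero h1
    set χE := (quadraticChar ↥E).ringHomComp (Int.castRingHom ℂ) with hχE
    set g := gaussSum χE ψE with hg
    -- sum over E
    have hA : ∑ t : ↥E, ψF ((t : F) ^ 2) = g := by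
      have h0 := sum_quad_eq' hEch ψE hψEne 1 one_ne_zero
      simp only [one_mul, map_one, Int.cast_one] at h0
      rw [hg, hχE, ← h0]
      refine Finset.sum_congr rfl fun t _ => ?_
      rw [hψEapp]
      push_cast
      rfl
    -- sum over KS
    have hd₀ne : ¬ IsSquare d₀ := by
      rintro ⟨r, hr⟩
      have hrF : s₀ ^ 2 = (r : F) * (r : F) := by
        have := congrArg (fun e : ↥E => (e : F)) hr
        push_cast at this
        exact this
      have hzero : (s₀ - r) * (s₀ + r) = 0 := by linear_combination hrF
      rcases mul_eq_zero.mp hzero with h | h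
      · apply hs₀E
        have hr2 := r.2
        rwa [show ((r : F)) = s₀ by linear_combination -h] at hr2
      · apply hs₀E
        have hr2 := neg_mem r.2
        rwa [show (-(r : F)) = s₀ by linear_combination -h] at hr2
    have hχd₀ : quadraticChar ↥E d₀ = -1 := quadraticChar_neg_one_iff_not_isSquare.mpr hd₀ne
    have hB : ∑ s : ↥KS, ψF ((s : F) ^ 2) = -g := by
      have hreidx := Fintype.sum_bijective _ hμbij
        (fun e : ↥E => ψE (d₀ * e ^ 2)) (fun s : ↥KS => ψF ((s : F) ^ 2))
        (by
          intro e
          show ψE (d₀ * e ^ 2) = ψF ((s₀ * (e : F)) ^ 2)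
          rw [hψEapp]
          congr 1
          push_cast
          ring)
      rw [hg, hχE, ← hreidx, sum_quad_eq' hEch ψE hψEne d₀ (by
        intro h
        rw [Subtype.ext_iff] at h
        push_cast at h
        exact hs₀0 (pow_eq_zero_iff (by norm_num) |>.mp h)), hχd₀]
      push_cast
      ring
    -- the total sum T over F
    have hT : ∑ x : F, ψF (x ^ 2) = -(g ^ 2) := by
      have hre := Fintype.sum_bijective _ hΦbij
        (fun z : ↥E × ↥KS => ψF (((z.1 : F) + (z.2 : F)) ^ 2)) (fun x : F => ψF (x ^ 2))
        (fun z => rfl)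
      rw [← hre, Fintype.sum_prod_type]
      have hsplit : ∀ (t : ↥E) (s : ↥KS),
          ψF (((t : F) + (s : F)) ^ 2) = ψF ((t : F) ^ 2) * ψF ((s : F) ^ 2) := by
        intro t s
        have hexp : ((t : F) + (s : F)) ^ 2 = ((t : F) ^ 2 + (s : F) ^ 2) + 2 * t * s := by
          ring
        have hker : ψF (2 * (t : F) * (s : F)) = 1 := by
          rw [hψFapp]
          have hmem : (2 * (t : F) * (s : F)) ∈ KS := by
            show (2 * (t : F) * (s : F)) ^ Q = -(2 * (t : F) * (s : F))
            rw [mul_pow, mul_pow, h2Q, (show ((t:F)) ^ Q = (t:F) from t.2),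
              (show ((s:F)) ^ Q = -(s:F) from s.2)]
            ring
          rw [hTrK _ hmem]
          exact AddChar.map_zero_eq_one _
        rw [hexp, AddChar.map_add_eq_mul, AddChar.map_add_eq_mul, hker, mul_one]
      calc ∑ t : ↥E, ∑ s : ↥KS, ψF (((t : F) + (s : F)) ^ 2)
          = ∑ t : ↥E, ∑ s : ↥KS, ψF ((t : F) ^ 2) * ψF ((s : F) ^ 2) := by
            exact Finset.sum_congr rfl fun t _ =>
              Finset.sum_congr rfl fun s _ => hsplit t s
        _ = (∑ t : ↥E, ψF ((t : F) ^ 2)) * (∑ s : ↥KS, ψF ((s : F) ^ 2)) := by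
            rw [Finset.sum_mul_sum]
        _ = g * (-g) := by rw [hA, hB]
        _ = -(g ^ 2) := by ring
    -- the Gauss sum squared
    have hχEne : χE ≠ 1 := by
      intro h
      obtain ⟨a, ha⟩ := quadraticChar_exists_neg_one hEch
      have ha0 : a ≠ 0 := by
        intro h0
        rw [h0, quadraticChar_zero] at ha
        norm_num at ha
      have h1 : χE a = 1 := by
        rw [h]
        exact MulChar.one_apply_coe ha0.isUnit.unit
      rw [hχE] at h1
      simp only [MulChar.ringHomComp_apply, ha] at h1
      norm_num at h1
    have hg2 : g ^ 2 = ((quadraticChar ↥E (-1) : ℤ) : ℂ) * Q := by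
      rw [hg, gaussSum_sq hχEne ((quadraticChar_isQuadratic ↥E).comp _)
        (AddChar.IsPrimitive.of_ne_one hψEne), hcardE]
      rfl
    -- value of χE(-1)
    have hval : ((quadraticChar ↥E (-1) : ℤ) : ℂ) = (-1 : ℂ) ^ (((p - 1) / 2) ^ 2 * k) := by
      have hQ4 : Q % 4 = 3 ↔ (p % 4 = 3 ∧ k % 2 = 1) := pow_mod_four p k hp
      have hχ4 := quadraticChar_neg_one hEch
      rw [hcardE] at hχ4
      have hQodd' : Q % 2 = 1 := Nat.odd_iff.mp hQodd
      rw [hχ4, ZMod.χ₄_nat_eq_if_mod_four, hQodd']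
      have hepar : (((p - 1) / 2) ^ 2 * k) % 2 = 1 ↔ (p % 4 = 3 ∧ k % 2 = 1) := by
        have hpo : p % 2 = 1 := Nat.odd_iff.mp hp
        have h12 : ((p - 1) / 2) % 2 = 1 ↔ p % 4 = 3 := by omega
        rcases Nat.even_or_odd ((p - 1) / 2) with he | he
        · have h2 : ((p-1)/2) % 2 = 0 := Nat.even_iff.mp he
          have : (((p - 1) / 2) ^ 2 * k) % 2 = 0 := by
            rw [sq, Nat.mul_mod, Nat.mul_mod ((p-1)/2), h2]
            simp
          omega
        · have h2 : ((p-1)/2) % 2 = 1 := Nat.odd_iff.mp he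
          have : (((p - 1) / 2) ^ 2 * k) % 2 = k % 2 := by
            rw [sq, Nat.mul_mod, Nat.mul_mod ((p-1)/2), h2]
            simp [Nat.mod_mod_of_dvd]
          omega
      by_cases hcase : p % 4 = 3 ∧ k % 2 = 1
      · rw [if_neg (by omega : ¬ Q % 4 = 1)]
        · rw [Odd.neg_one_pow (Nat.odd_iff.mpr (hepar.mpr hcase))]
          norm_num
      · have hQ41 : Q % 4 = 1 := by
          have := hQ4
          omega
        rw [if_pos hQ41, Even.neg_one_pow (Nat.even_iff.mpr (by omega))]
        norm_num
    -- each inner sum equals T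
    have hinner : ∀ y : ZMod p, y ≠ 0 →
        ∑ x : F, ψF (algebraMap (ZMod p) F y * x ^ 2) = ∑ x : F, ψF (x ^ 2) := by
      intro y hy
      have hay : algebraMap (ZMod p) F y ≠ 0 := by
        simp only [ne_eq, map_eq_zero]; exact hy
      have hsq : IsSquare (algebraMap (ZMod p) F y) := by
        rw [FiniteField.isSquare_iff hF2 hay, hcard]
        have hueven : u % 2 = 0 := by rw [hupar]; omega
        have hu2 : u = 2 * (u / 2) := by omega
        have h6 : 2 * ((p - 1) * (u / 2)) = 2 * d := by
          rw [show 2 * ((p - 1) * (u / 2)) = (p - 1) * (2 * (u / 2)) by ring, ← hu2, hgeom, h2d]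
        have hd_eq : d = (p - 1) * (u / 2) := (Nat.eq_of_mul_eq_mul_left (by norm_num) h6).symm
        show (algebraMap (ZMod p) F y) ^ d = 1
        rw [hd_eq, pow_mul, ← map_pow, ZMod.pow_card_sub_one_eq_one hy, map_one, one_pow]
      obtain ⟨w, hw⟩ := hsq
      have hw0 : w ≠ 0 := by
        intro h
        rw [h, mul_zero] at hw
        exact hay hw
      calc ∑ x : F, ψF (algebraMap (ZMod p) F y * x ^ 2)
          = ∑ x : F, ψF ((w * x) ^ 2) := by
            refine Finset.sum_congr rfl fun x _ => ?_
            congr 1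
            rw [hw]
            ring
        _ = ∑ x : F, ψF (x ^ 2) :=
            Fintype.sum_bijective (fun x : F => w * x) (mulLeft_bijective₀ w hw0)
              (fun x : F => ψF ((w * x) ^ 2)) (fun x : F => ψF (x ^ 2)) (fun x => rfl)
    -- final assembly
    have hfiltcard : (Finset.univ.filter (fun y : ZMod p => y ≠ 0)).card = p - 1 := by
      rw [Finset.filter_ne', Finset.card_erase_of_mem (Finset.mem_univ 0),
        Finset.card_univ, ZMod.card]
    have hm1odd : (m - 1) % 2 = 1 := by omega
    have hmono : (-1 : ℂ) ^ (m - 1) = -1 := by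
      rw [neg_one_pow_par (m-1) 1 (by omega)]
      norm_num
    have hm2k : m / 2 = k := by omega
    calc ∑ y ∈ Finset.univ.filter (fun y : ZMod p => y ≠ 0), ∑ x : F,
          epsChar p (Tr (algebraMap (ZMod p) F y * x ^ 2))
        = ∑ y ∈ Finset.univ.filter (fun y : ZMod p => y ≠ 0), ∑ x : F, ψF (x ^ 2) := by
          refine Finset.sum_congr rfl fun y hy => ?_
          simp only [Finset.mem_filter] at hy
          rw [← hinner y hy.2]
          exact Finset.sum_congr rfl fun x _ => heps _
      _ = ((p - 1 : ℕ) : ℂ) * ∑ x : F, ψF (x ^ 2) := by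
          rw [Finset.sum_const, hfiltcard, nsmul_eq_mul]
      _ = ((p - 1 : ℕ) : ℂ) * (-(((quadraticChar ↥E (-1) : ℤ) : ℂ) * Q)) := by
          rw [hT, hg2]
      _ = (-1 : ℂ) ^ (m - 1) * (-1 : ℂ) ^ (((p - 1) / 2) ^ 2 * (m / 2)) *
            ((p : ℂ) - 1) * (p : ℂ) ^ (m / 2) := by
          rw [hmono, hm2k, hval]
          have hcast : ((p - 1 : ℕ) : ℂ) = (p : ℂ) - 1 := by
            have : (1 : ℕ) ≤ p := hpp.one_lt.le
            push_cast [this]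
            ring
          have hQcast : ((Q : ℕ) : ℂ) = (p : ℂ) ^ k := by
            rw [hQ]
            push_cast
            ring
          rw [hcast, hQcast]
          ring
end

section
/- Let C be a linear code over GF(p) with minimum nonzero weight w_min and maximum weight w_max. If w_min/w_max > (p-1)/p, then every nonzero codeword of C is minimal, i.e., no nonzero codeword's support properly contains the support of another nonzero codeword. -/
theorem stmt_12 (p n : ℕ) [Fact p.Prime]
    (C : Submodule (ZMod p) (Fin n → ZMod p))
    (wt : (Fin n → ZMod p) → ℕ) (hwt : ∀ c, wt c = Set.ncard {i | c i ≠ 0})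
    (wmin wmax : ℕ)
    (hmin : ∀ c ∈ C, c ≠ 0 → wmin ≤ wt c)
    (hmin' : ∃ c ∈ C, c ≠ 0 ∧ wt c = wmin)
    (hmax : ∀ c ∈ C, wt c ≤ wmax)
    (hmax' : ∃ c ∈ C, wt c = wmax)
    (hratio : ((p : ℚ) - 1) / p < (wmin : ℚ) / wmax) :
    -- every nonzero codeword of C is minimal
    ∀ c ∈ C, c ≠ 0 → ∀ c' ∈ C, c' ≠ 0 →
      {i | c' i ≠ 0} ⊆ {i | c i ≠ 0} → ∃ a : ZMod p, c' = a • c := by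
  classical
  intro c hc hc0 c' hc' hc'0 hsub
  by_contra hno
  push_neg at hno
  have hp : 0 < p := (Fact.out : p.Prime).pos
  set S : Finset (Fin n) := Finset.univ.filter (fun i => c i ≠ 0) with hS
  have hwtfin : ∀ d : Fin n → ZMod p,
      wt d = (Finset.univ.filter (fun i => d i ≠ 0)).card := by
    intro d
    rw [hwt, ← Set.ncard_coe_finset]
    congr 1
    ext i; simp
  have hsub' : ∀ i, c i = 0 → c' i = 0 := by
    intro i hi
    by_contra h
    exact (hsub h) hi
  -- for each a, wmin + N_a ≤ S.card
  have key : ∀ a : ZMod p,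
      wmin + (S.filter (fun i => c' i = a * c i)).card ≤ S.card := by
    intro a
    set d := c' - a • c with hd
    have hdC : d ∈ C := C.sub_mem hc' (C.smul_mem a hc)
    have hd0 : d ≠ 0 := by
      intro h
      exact hno a (by rwa [hd, sub_eq_zero] at h)
    have hwd : wt d = (S.filter (fun i => ¬ c' i = a * c i)).card := by
      rw [hwtfin]
      congr 1
      ext i
      simp only [hS, Finset.mem_filter, Finset.mem_univ, true_and]
      constructor
      · intro hi
        have hci : c i ≠ 0 := by
          intro h0
          apply hi
          simp [hd, hsub' i h0, h0]
        refine ⟨hci, ?_⟩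
        intro heq
        apply hi
        simp [hd, heq]
      · rintro ⟨hci, hne⟩
        simp only [hd, Pi.sub_apply, Pi.smul_apply, smul_eq_mul, ne_eq, sub_eq_zero]
        exact hne
    have h1 := hmin d hdC hd0
    rw [hwd] at h1
    have h2 := Finset.card_filter_add_card_filter_not
      (s := S) (p := fun i => c' i = a * c i)
    omega
  -- the fibers partition S
  have hfib : ∑ a : ZMod p, (S.filter (fun i => c' i = a * c i)).card = S.card := by
    have := Finset.card_eq_sum_card_fiberwise
      (f := fun i => c' i * (c i)⁻¹) (s := S) (t := Finset.univ)
      (fun i _ => Finset.mem_univ _)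
    rw [this]
    apply Finset.sum_congr rfl
    intro a _
    congr 1
    apply Finset.filter_congr
    intro i hi
    have hci : c i ≠ 0 := by
      simpa [hS] using hi
    rw [mul_inv_eq_iff_eq_mul₀ hci, mul_comm]
  -- sum key over all a
  have hsum : p * wmin + S.card ≤ p * S.card := by
    calc p * wmin + S.card
        = ∑ a : ZMod p, (wmin + (S.filter (fun i => c' i = a * c i)).card) := by
          rw [Finset.sum_add_distrib, Finset.sum_const, Finset.card_univ,
            ZMod.card, hfib, smul_eq_mul]
      _ ≤ ∑ _a : ZMod p, S.card := Finset.sum_le_sum (fun a _ => key a)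
      _ = p * S.card := by
          rw [Finset.sum_const, Finset.card_univ, ZMod.card, smul_eq_mul]
  -- S nonempty
  have hSpos : 0 < S.card := by
    rcases Function.ne_iff.mp hc0 with ⟨i, hi⟩
    exact Finset.card_pos.mpr ⟨i, by simp only [hS, Finset.mem_filter, Finset.mem_univ, true_and]; simpa using hi⟩
  have hScard : S.card ≤ wmax := by
    have := hmax c hc
    rwa [hwtfin, ← hS] at this
  have hwmaxpos : 0 < wmax := lt_of_lt_of_le hSpos hScard
  -- contradiction in ℚ
  have hq : ((p : ℚ) - 1) * wmax < wmin * p := by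
    rwa [div_lt_div_iff₀ (by exact_mod_cast hp) (by exact_mod_cast hwmaxpos)] at hratio
  have hsumq : (p : ℚ) * wmin + S.card ≤ p * S.card := by exact_mod_cast hsum
  have hScardq : (S.card : ℚ) ≤ wmax := by exact_mod_cast hScard
  have hp1 : (1 : ℚ) ≤ p := by exact_mod_cast hp
  nlinarith [hScardq, hsumq, hq, hp1]
end
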